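/- arXiv:1902.11156 — 3 statements merged into one kernel-verified Lean document; each statement's English description precedes it below -/
import Mathlib

section
/- Let b_1, …, b_L ∈ ℂ^K satisfy Σ_{ℓ=1}^L b_ℓ b_ℓ* = Id_K, and let Z ∈ ℂ^{K×N} with ‖Z‖_F = 1. Then |{ℓ ∈ [L] : ‖Z* b_ℓ‖ ≥ ‖Z‖_{B1}/(L·log(eL))}| ≥ ‖Z‖_{B1}²/log²(eL). -/
open MeasureTheory ProbabilityTheory Matrix
open scoped ENNReal

noncomputable section

/-- Euclidean norm of a vector in `𝕜^n`. -/
def vecNorm {𝕜 : Type*} [RCLike 𝕜] {n : ℕ} (v : Fin n → 𝕜) : ℝ :=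
  Real.sqrt (∑ i, ‖v i‖ ^ 2)

/-- Frobenius norm of a matrix. -/
def frobNorm {𝕜 : Type*} [RCLike 𝕜] {p q : ℕ} (Z : Matrix (Fin p) (Fin q) 𝕜) : ℝ :=
  Real.sqrt (∑ i, ∑ j, ‖Z i j‖ ^ 2)

/-- Frobenius inner product `⟨Z, W⟩_F = Tr (Zᴴ W)`. -/
def frobInner {𝕜 : Type*} [RCLike 𝕜] {p q : ℕ} (Z W : Matrix (Fin p) (Fin q) 𝕜) : 𝕜 :=
  (Zᴴ * W).trace

/-- Nuclear norm of a matrix: the sum of its singular values, i.e. the sum of the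
square roots of the eigenvalues of `Zᴴ * Z`. -/
def nuclearNorm {𝕜 : Type*} [RCLike 𝕜] {p q : ℕ} (Z : Matrix (Fin p) (Fin q) 𝕜) : ℝ :=
  ∑ j, Real.sqrt ((Matrix.isHermitian_conjTranspose_mul_self Z).eigenvalues j)

/-- Spectral norm of a matrix: its largest singular value. -/
def specNorm {𝕜 : Type*} [RCLike 𝕜] {p q : ℕ} (Z : Matrix (Fin p) (Fin q) 𝕜) : ℝ :=
  ⨆ j, Real.sqrt ((Matrix.isHermitian_conjTranspose_mul_self Z).eigenvalues j)

/-- Descent cone of the nuclear norm at `X0`. -/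
def descentCone {𝕜 : Type*} [RCLike 𝕜] {p q : ℕ} (X0 : Matrix (Fin p) (Fin q) 𝕜) :
    Set (Matrix (Fin p) (Fin q) 𝕜) :=
  {Z | ∃ ε : ℝ, 0 < ε ∧ nuclearNorm (X0 + ε • Z) ≤ nuclearNorm X0}

/-- Minimum conic singular value of `A` with respect to the cone `S`,
`λ_min (A, S) = inf {‖A Z‖ / ‖Z‖_F : Z ∈ S \ {0}}`. -/
def minConicSV {𝕜 : Type*} [RCLike 𝕜] {p q m : ℕ}
    (A : Matrix (Fin p) (Fin q) 𝕜 → Fin m → 𝕜) (S : Set (Matrix (Fin p) (Fin q) 𝕜)) : ℝ :=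
  sInf ((fun Z => vecNorm (A Z) / frobNorm Z) '' (S \ {0}))

/-- The standard (circularly symmetric) complex Gaussian distribution `CN(0,1)` on `ℂ`:
the law of `(g₁ + i g₂)/√2` with `g₁, g₂` independent standard real Gaussians. -/
def complexStdGaussian : Measure ℂ :=
  Measure.map (fun p : ℝ × ℝ => ((p.1 : ℂ) + (p.2 : ℂ) * Complex.I) / (Real.sqrt 2 : ℂ))
    ((gaussianReal 0 1).prod (gaussianReal 0 1))

/-- Law of a standard complex Gaussian vector in `ℂ^n` (i.i.d. `CN(0,1)` entries). -/
def gaussianVec (n : ℕ) : Measure (Fin n → ℂ) :=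
  Measure.pi fun _ => complexStdGaussian

/-- Joint law of `L` independent standard complex Gaussian vectors in `ℂ^N`. -/
def gaussianEnsemble (L N : ℕ) : Measure (Fin L → Fin N → ℂ) :=
  Measure.pi fun _ => gaussianVec N

/-- The tight-frame condition `Σ_ℓ b_ℓ b_ℓ* = Id`. -/
def IsTightFrame {K L : ℕ} (b : Fin L → Fin K → ℂ) : Prop :=
  ∑ ℓ, Matrix.vecMulVec (b ℓ) (star (b ℓ)) = (1 : Matrix (Fin K) (Fin K) ℂ)

/-- The bilinear form `u* X v = ⟨u v*, X⟩_F`. -/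
def pairF {K N : ℕ} (u : Fin K → ℂ) (X : Matrix (Fin K) (Fin N) ℂ) (v : Fin N → ℂ) : ℂ :=
  ∑ i, ∑ j, (starRingEnd ℂ) (u i) * X i j * v j

/-- Blind deconvolution measurement operator `(𝒜 X) ℓ = b_ℓ* X c_ℓ = ⟨b_ℓ c_ℓ*, X⟩_F`. -/
def bdOp {K N L : ℕ} (b : Fin L → Fin K → ℂ) (c : Fin L → Fin N → ℂ)
    (X : Matrix (Fin K) (Fin N) ℂ) : Fin L → ℂ :=
  fun ℓ => pairF (b ℓ) X (c ℓ)

/-- Squared coherence `μ_{h0}² = (L/‖h0‖²) max_ℓ |⟨b_ℓ, h0⟩|²`. -/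
def coherenceSq {K L : ℕ} (b : Fin L → Fin K → ℂ) (h0 : Fin K → ℂ) : ℝ :=
  ((L : ℝ) / vecNorm h0 ^ 2) * ⨆ ℓ, ‖∑ i, (starRingEnd ℂ) (b ℓ i) * h0 i‖ ^ 2

/-- The set `H_μ` of `μ`-incoherent vectors: `√L |⟨b_ℓ, h⟩| ≤ μ ‖h‖` for all `ℓ`. -/
def incoherentSet {K L : ℕ} (b : Fin L → Fin K → ℂ) (μ : ℝ) : Set (Fin K → ℂ) :=
  {h | ∀ ℓ, Real.sqrt L * ‖∑ i, (starRingEnd ℂ) (b ℓ i) * h i‖ ≤ μ * vecNorm h}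

/-- The rank-one matrix `h m*`. -/
def rankOne {K N : ℕ} (h : Fin K → ℂ) (m : Fin N → ℂ) : Matrix (Fin K) (Fin N) ℂ :=
  Matrix.vecMulVec h (star m)

/-- The `B1`-norm `‖Z‖_{B1} = Σ_ℓ ‖Z* b_ℓ‖`. -/
def B1norm {K N L : ℕ} (b : Fin L → Fin K → ℂ) (Z : Matrix (Fin K) (Fin N) ℂ) : ℝ :=
  ∑ ℓ, vecNorm (Zᴴ.mulVec (b ℓ))

/-- The set `E_{μ,δ}`. -/
def Eset {K L : ℕ} (N : ℕ) (b : Fin L → Fin K → ℂ) (μ δ : ℝ) :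
    Set (Matrix (Fin K) (Fin N) ℂ) :=
  {Z | ∃ (h0 : Fin K → ℂ) (m0 : Fin N → ℂ), h0 ∈ incoherentSet b μ ∧ h0 ≠ 0 ∧ m0 ≠ 0 ∧
    Z ∈ descentCone (rankOne h0 m0) ∧
    δ ≤ -(frobInner Z (rankOne h0 m0)).re / frobNorm (rankOne h0 m0) ∧ frobNorm Z = 1}

/-- Gaussian width `ω(E) = 𝔼 [sup_{X ∈ E} Re ⟨X, G⟩_F]` for a Gaussian matrix `G`. -/
def gaussianWidth {K N : ℕ} (E : Set (Matrix (Fin K) (Fin N) ℂ)) : ℝ :=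
  ∫ g, sSup ((fun X => (frobInner X (Matrix.of g)).re) '' E) ∂(gaussianEnsemble K N)

/-- Matrix completion measurement operator `(𝒜 X) i = √(n1 n2/m) X_{a_i, b_i}`. -/
def mcOp {n1 n2 m : ℕ} (s : Fin m → Fin n1 × Fin n2) (X : Matrix (Fin n1) (Fin n2) ℝ) :
    Fin m → ℝ :=
  fun i => Real.sqrt ((n1 : ℝ) * n2 / m) * X (s i).1 (s i).2

/-- Joint law of `m` independent uniform samples from `[n1] × [n2]`. -/
def uniformSample (n1 n2 m : ℕ) : Measure (Fin m → Fin n1 × Fin n2) :=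
  Measure.pi fun _ => (((n1 : ℝ≥0∞) * (n2 : ℝ≥0∞))⁻¹ • Measure.count)

/-- Coherence `μ(V) = √(n/r) max_i ‖Vᵀ e_i‖` of a matrix `V ∈ ℝ^{n × r}`. -/
def mcCoherence {n r : ℕ} (V : Matrix (Fin n) (Fin r) ℝ) : ℝ :=
  Real.sqrt ((n : ℝ) / r) * ⨆ i, Real.sqrt (∑ k, ‖V i k‖ ^ 2)

theorem sumsq_eq {K N L : ℕ} (b : Fin L → Fin K → ℂ) (hb : IsTightFrame b)
    (Z : Matrix (Fin K) (Fin N) ℂ) :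
    ∑ ℓ, vecNorm (Zᴴ.mulVec (b ℓ)) ^ 2 = ∑ i, ∑ j, ‖Z i j‖ ^ 2 := by
  have hb' : ∀ i i', ∑ ℓ, b ℓ i * starRingEnd ℂ (b ℓ i') = if i = i' then 1 else 0 := by
    intro i i'
    have h := congrArg (fun M : Matrix (Fin K) (Fin K) ℂ => M i i') hb
    simpa [Matrix.sum_apply, Matrix.vecMulVec_apply, Matrix.one_apply] using h
  have hstep : ∀ ℓ, vecNorm (Zᴴ.mulVec (b ℓ)) ^ 2 = ∑ j, ‖Zᴴ.mulVec (b ℓ) j‖ ^ 2 := by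
    intro ℓ
    exact Real.sq_sqrt (Finset.sum_nonneg fun j _ => by positivity)
  simp_rw [hstep]
  have expand : ∀ ℓ j, (Zᴴ.mulVec (b ℓ)) j * starRingEnd ℂ ((Zᴴ.mulVec (b ℓ)) j)
      = ∑ i, ∑ i', (starRingEnd ℂ (Z i j) * Z i' j) * (b ℓ i * starRingEnd ℂ (b ℓ i')) := by
    intro ℓ j
    rw [Matrix.mulVec, dotProduct]
    simp only [Matrix.conjTranspose_apply, map_sum, _root_.map_mul, starRingEnd_apply, star_star]
    rw [Finset.sum_mul_sum]
    apply Finset.sum_congr rfl; intro i _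
    apply Finset.sum_congr rfl; intro i' _
    simp only [← starRingEnd_apply]
    ring
  have key : ∀ j, ∑ ℓ, (Zᴴ.mulVec (b ℓ)) j * starRingEnd ℂ ((Zᴴ.mulVec (b ℓ)) j)
      = ∑ i, starRingEnd ℂ (Z i j) * Z i j := by
    intro j
    simp_rw [expand]
    rw [Finset.sum_comm]
    apply Finset.sum_congr rfl; intro i _
    rw [Finset.sum_comm]
    simp_rw [← Finset.mul_sum, hb']
    simp
  have hre : ∀ w : ℂ, ‖w‖ ^ 2 = (w * starRingEnd ℂ w).re := by
    intro w
    rw [Complex.mul_conj]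
    simp [Complex.normSq_eq_norm_sq, ← Complex.ofReal_pow]
  calc ∑ ℓ, ∑ j, ‖Zᴴ.mulVec (b ℓ) j‖ ^ 2
      = ∑ j, ∑ ℓ, ((Zᴴ.mulVec (b ℓ)) j * starRingEnd ℂ ((Zᴴ.mulVec (b ℓ)) j)).re := by
        simp_rw [hre]; rw [Finset.sum_comm]
    _ = ∑ j, ∑ i, (starRingEnd ℂ (Z i j) * Z i j).re := by
        simp_rw [← Complex.re_sum, key]
    _ = ∑ i, ∑ j, ‖Z i j‖ ^ 2 := by
        rw [Finset.sum_comm]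
        apply Finset.sum_congr rfl; intro i _
        apply Finset.sum_congr rfl; intro j _
        rw [hre, mul_comm]

/-- Lemma 5.4: a unit Frobenius norm matrix has many rows `Z* b_ℓ`
of size at least `‖Z‖_{B1}/(L log(eL))`. -/
theorem many_large_entries {K N L : ℕ} (b : Fin L → Fin K → ℂ)
    (hb : IsTightFrame b)
    (Z : Matrix (Fin K) (Fin N) ℂ) (hZ : frobNorm Z = 1) :
    B1norm b Z ^ 2 / Real.log (Real.exp 1 * L) ^ 2 ≤
      (({ℓ : Fin L | B1norm b Z / ((L : ℝ) * Real.log (Real.exp 1 * L)) ≤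
          vecNorm (Zᴴ.mulVec (b ℓ))} : Set (Fin L)).ncard : ℝ) := by
  classical
  set a : Fin L → ℝ := fun ℓ => vecNorm (Zᴴ.mulVec (b ℓ)) with ha
  set B : ℝ := B1norm b Z with hBdef
  set t : ℝ := Real.log (Real.exp 1 * L) with htdef
  have ha0 : ∀ ℓ, 0 ≤ a ℓ := fun ℓ => Real.sqrt_nonneg _
  have hBsum : B = ∑ ℓ, a ℓ := rfl
  -- sum of squares is 1
  have hsq1 : ∑ i, ∑ j, ‖Z i j‖ ^ 2 = 1 := by
    have h0 : 0 ≤ ∑ i, ∑ j, ‖Z i j‖ ^ 2 :=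
      Finset.sum_nonneg fun i _ => Finset.sum_nonneg fun j _ => by positivity
    have h1 : frobNorm Z ^ 2 = ∑ i, ∑ j, ‖Z i j‖ ^ 2 := Real.sq_sqrt h0
    rw [hZ] at h1
    simpa using h1.symm
  have hsum2 : ∑ ℓ, a ℓ ^ 2 = 1 := by
    rw [ha]; rw [sumsq_eq b hb Z, hsq1]
  -- L is positive
  have hL : 0 < L := by
    by_contra h
    push_neg at h
    haveI : IsEmpty (Fin L) := ⟨fun i => absurd i.isLt (by omega)⟩
    rw [Finset.univ_eq_empty, Finset.sum_empty] at hsum2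
    norm_num at hsum2
  have hL' : (1 : ℝ) ≤ L := by exact_mod_cast hL
  -- t ≥ 1
  have ht1 : 1 ≤ t := by
    rw [htdef]
    calc (1:ℝ) = Real.log (Real.exp 1) := (Real.log_exp 1).symm
    _ ≤ Real.log (Real.exp 1 * L) := by
        apply Real.log_le_log (Real.exp_pos 1)
        nlinarith [Real.exp_pos 1]
  have ht0 : 0 < t := lt_of_lt_of_le one_pos ht1
  -- B ≥ 1
  have hB0 : 0 ≤ B := by rw [hBsum]; exact Finset.sum_nonneg fun ℓ _ => ha0 ℓ
  have hB1 : 1 ≤ B := by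
    have h1 : ∀ ℓ, a ℓ ≤ B := by
      intro ℓ
      rw [hBsum]
      exact Finset.single_le_sum (fun i _ => ha0 i) (Finset.mem_univ ℓ)
    have h2 : (1:ℝ) ≤ B * B := by
      calc (1:ℝ) = ∑ ℓ, a ℓ ^ 2 := hsum2.symm
      _ ≤ ∑ ℓ, a ℓ * B := Finset.sum_le_sum fun ℓ _ => by
          rw [sq]; exact mul_le_mul_of_nonneg_left (h1 ℓ) (ha0 ℓ)
      _ = B * B := by rw [← Finset.sum_mul, ← hBsum, mul_comm]
    nlinarith
  -- B² ≤ L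
  have hBL : B ^ 2 ≤ L := by
    have := sq_sum_le_card_mul_sum_sq (s := Finset.univ) (f := a)
    rw [hsum2] at this
    simpa [← hBsum] using this
  -- the finset version of the set
  set thresh : ℝ := B / ((L : ℝ) * t) with hths
  have hth0 : 0 ≤ thresh := by positivity
  set S : Finset (Fin L) := Finset.univ.filter (fun ℓ => thresh ≤ a ℓ) with hSdef
  have hncard : ({ℓ : Fin L | thresh ≤ a ℓ} : Set (Fin L)).ncard = S.card := by
    rw [show ({ℓ : Fin L | thresh ≤ a ℓ} : Set (Fin L)) = ↑S by ext ℓ; simp [hSdef],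
      Set.ncard_coe_finset]
  rw [hncard]
  -- S is nonempty
  have hSne : 1 ≤ S.card := by
    have hex : ∃ ℓ, B / L ≤ a ℓ := by
      by_contra h
      push_neg at h
      have : ∑ ℓ, a ℓ < ∑ (_ : Fin L), B / L :=
        Finset.sum_lt_sum_of_nonempty (by
            haveI : Nonempty (Fin L) := ⟨⟨0, hL⟩⟩
            exact Finset.univ_nonempty)
          (fun ℓ _ => h ℓ)
      rw [← hBsum, Finset.sum_const, Finset.card_univ, Fintype.card_fin, nsmul_eq_mul] at this
      rw [mul_div_cancel₀ B (by positivity)] at this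
      exact lt_irrefl B this
    obtain ⟨ℓ, hℓ⟩ := hex
    have hle : thresh ≤ B / L := by
      rw [hths]
      apply div_le_div_of_nonneg_left hB0 (by positivity)
      nlinarith
    refine Finset.card_pos.mpr ⟨ℓ, ?_⟩
    simp [hSdef]
    exact le_trans hle hℓ
  by_cases hcase : L ≤ 2
  · -- small L : B ≤ t
    have hBt : B ≤ t := by
      have hBsq : B ^ 2 ≤ t ^ 2 := by
        have h12 : L = 1 ∨ L = 2 := by omega
        rcases h12 with h | h
        · have hc : (L : ℝ) = 1 := by exact_mod_cast congrArg Nat.cast h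
          have ht' : t = 1 := by
            rw [htdef, hc, mul_one, Real.log_exp]
          rw [hc] at hBL
          rw [ht']
          nlinarith
        · have hc : (L : ℝ) = 2 := by exact_mod_cast congrArg Nat.cast h
          have hlog2 : (0.6931471803 : ℝ) < Real.log 2 := Real.log_two_gt_d9
          have ht' : t = 1 + Real.log 2 := by
            rw [htdef, hc, Real.log_mul (Real.exp_ne_zero 1) (by norm_num), Real.log_exp]
          rw [hc] at hBL
          nlinarith
      have h2 := Real.sqrt_le_sqrt hBsq
      rwa [Real.sqrt_sq hB0, Real.sqrt_sq (le_of_lt ht0)] at h2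
    calc B ^ 2 / t ^ 2 ≤ 1 := by
          rw [div_le_one (by positivity)]
          exact pow_le_pow_left₀ hB0 hBt 2
    _ ≤ (S.card : ℝ) := by exact_mod_cast hSne
  · -- L ≥ 3 : t ≥ 2
    push_neg at hcase
    have ht2 : 2 ≤ t := by
      rw [htdef, ← Real.log_exp 2]
      apply Real.log_le_log (Real.exp_pos 2)
      have : Real.exp 2 = Real.exp 1 * Real.exp 1 := by
        rw [← Real.exp_add]; norm_num
      rw [this]
      have he : Real.exp 1 ≤ 3 := by
        nlinarith [Real.exp_one_lt_d9]
      have : (3:ℝ) ≤ L := by exact_mod_cast hcase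
      nlinarith [Real.exp_pos 1]
    -- sum over complement bounded
    have hcomp : ∑ ℓ ∈ Finset.univ.filter (fun ℓ => ¬ thresh ≤ a ℓ), a ℓ ≤ B / t := by
      calc ∑ ℓ ∈ Finset.univ.filter (fun ℓ => ¬ thresh ≤ a ℓ), a ℓ
          ≤ ∑ ℓ ∈ Finset.univ.filter (fun ℓ => ¬ thresh ≤ a ℓ), thresh :=
            Finset.sum_le_sum fun ℓ hℓ => by
              simp only [Finset.mem_filter] at hℓ
              exact le_of_lt (lt_of_not_ge hℓ.2)
        _ = (Finset.univ.filter (fun ℓ => ¬ thresh ≤ a ℓ)).card * thresh := by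
            rw [Finset.sum_const, nsmul_eq_mul]
        _ ≤ (L : ℝ) * thresh := by
            apply mul_le_mul_of_nonneg_right _ hth0
            exact_mod_cast (Finset.card_filter_le _ _).trans (by simp)
        _ = B / t := by
            rw [hths]
            field_simp
    have hSsum : B - B / t ≤ ∑ ℓ ∈ S, a ℓ := by
      have := Finset.sum_filter_add_sum_filter_not Finset.univ (fun ℓ => thresh ≤ a ℓ) a
      rw [← hSdef] at this
      rw [← hBsum] at this
      linarith
    have hCS : (∑ ℓ ∈ S, a ℓ) ^ 2 ≤ (S.card : ℝ) := by
      have h1 := sq_sum_le_card_mul_sum_sq (s := S) (f := a)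
      have h2 : ∑ ℓ ∈ S, a ℓ ^ 2 ≤ 1 := by
        rw [← hsum2]
        exact Finset.sum_le_sum_of_subset_of_nonneg (Finset.subset_univ S)
          (fun i _ _ => by positivity)
      calc (∑ ℓ ∈ S, a ℓ) ^ 2 ≤ (S.card : ℝ) * ∑ ℓ ∈ S, a ℓ ^ 2 := by exact_mod_cast h1
      _ ≤ (S.card : ℝ) * 1 := by
          apply mul_le_mul_of_nonneg_left h2 (by positivity)
      _ = (S.card : ℝ) := mul_one _
    have hkey : B / t ≤ B - B / t := by
      rw [le_sub_iff_add_le, ← two_mul, div_eq_mul_inv, ← mul_assoc]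
      calc 2 * B * t⁻¹ ≤ 2 * B * 2⁻¹ := by
            apply mul_le_mul_of_nonneg_left _ (by positivity)
            exact inv_anti₀ (by norm_num) ht2
      _ = B := by ring
    calc B ^ 2 / t ^ 2 = (B / t) ^ 2 := (div_pow B t 2).symm
    _ ≤ (B - B / t) ^ 2 := pow_le_pow_left₀ (by positivity) hkey 2
    _ ≤ (∑ ℓ ∈ S, a ℓ) ^ 2 := pow_le_pow_left₀ (by linarith [div_nonneg hB0 (le_of_lt ht0)]) hSsum 2
    _ ≤ (S.card : ℝ) := hCS
end
end

section
/- Let b_1, …, b_L ∈ ℂ^K satisfy Σ_{ℓ=1}^L b_ℓ b_ℓ* = Id_K, let μ ≥ 1 and δ > 0. Then inf_{Z ∈ E_{μ,δ}} ‖Z‖_{B1} ≥ δ·√L/μ. -/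
open MeasureTheory ProbabilityTheory Matrix
open scoped ENNReal

noncomputable section

lemma vecNorm_eq_norm {n : ℕ} (v : Fin n → ℂ) :
    vecNorm v = ‖(WithLp.equiv 2 (Fin n → ℂ)).symm v‖ := by
  rw [EuclideanSpace.norm_eq]; rfl

lemma vecNorm_nonneg' {n : ℕ} (v : Fin n → ℂ) : 0 ≤ vecNorm v := Real.sqrt_nonneg _

lemma vecNorm_pos' {n : ℕ} {v : Fin n → ℂ} (hv : v ≠ 0) : 0 < vecNorm v := by
  rw [vecNorm_eq_norm]
  rw [norm_pos_iff]
  intro h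
  apply hv
  have := congrArg (WithLp.equiv 2 (Fin n → ℂ)) h
  simpa using this

lemma vecNorm_star {n : ℕ} (v : Fin n → ℂ) :
    vecNorm (fun j => star (v j)) = vecNorm v := by
  simp [vecNorm]

lemma abs_sum_mul_le' {n : ℕ} (a c : Fin n → ℂ) :
    ‖∑ j, a j * c j‖ ≤ vecNorm a * vecNorm c := by
  have h := norm_inner_le_norm (𝕜 := ℂ)
    ((WithLp.equiv 2 (Fin n → ℂ)).symm (fun j => star (a j)))
    ((WithLp.equiv 2 (Fin n → ℂ)).symm c)
  have hi : (inner ℂ ((WithLp.equiv 2 (Fin n → ℂ)).symm (fun j => star (a j)))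
      ((WithLp.equiv 2 (Fin n → ℂ)).symm c) : ℂ) = ∑ j, a j * c j := by
    simp [PiLp.inner_apply, RCLike.inner_apply, mul_comm]
  rw [hi] at h
  calc ‖∑ j, a j * c j‖ ≤ _ := h
    _ = vecNorm a * vecNorm c := by
        rw [← vecNorm_eq_norm, ← vecNorm_eq_norm, vecNorm_star]

lemma frobInner_eq' {p q : ℕ} (Z W : Matrix (Fin p) (Fin q) ℂ) :
    frobInner Z W = ∑ j, ∑ i, (starRingEnd ℂ) (Z i j) * W i j := by
  simp [frobInner, Matrix.trace, Matrix.mul_apply, Matrix.conjTranspose_apply,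
    Matrix.diag]

set_option maxHeartbeats 1000000 in
/-- Lemma 5.5: lower bound for the `B1`-norm on the set `E_{μ,δ}`,
`inf_{Z ∈ E_{μ,δ}} ‖Z‖_{B1} ≥ δ √L / μ`. -/
theorem B1norm_lower_bound_on_Eset {K N L : ℕ} (b : Fin L → Fin K → ℂ)
    (hb : IsTightFrame b) (μ δ : ℝ) (hμ : 1 ≤ μ) (hδ : 0 < δ) :
    ∀ Z ∈ Eset N b μ δ, δ * Real.sqrt L / μ ≤ B1norm b Z := by
  intro Z hZ
  obtain ⟨h0, m0, hinc, hh0, hm0, -, hdle, -⟩ := hZ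
  have hμ0 : (0:ℝ) < μ := lt_of_lt_of_le one_pos hμ
  have hB1 : 0 ≤ B1norm b Z := Finset.sum_nonneg fun _ _ => Real.sqrt_nonneg _
  rcases Nat.eq_zero_or_pos L with hL | hL
  · subst hL
    simp only [Nat.cast_zero, Real.sqrt_zero, mul_zero, zero_div]
    exact hB1
  have hs : (0:ℝ) < Real.sqrt L := Real.sqrt_pos.mpr (by exact_mod_cast hL)
  set H := vecNorm h0 with hHdef
  set M := vecNorm m0 with hMdef
  have hH : 0 < H := vecNorm_pos' hh0
  have hM : 0 < M := vecNorm_pos' hm0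
  -- Frobenius norm of the rank-one matrix
  have hF : frobNorm (rankOne h0 m0) = H * M := by
    rw [hHdef, hMdef]
    unfold frobNorm rankOne vecNorm
    rw [← Real.sqrt_mul (show (0:ℝ) ≤ ∑ i, ‖h0 i‖^2 from Finset.sum_nonneg fun _ _ => by positivity)]
    congr 1
    rw [Finset.sum_mul_sum]
    refine Finset.sum_congr rfl fun i _ => Finset.sum_congr rfl fun j _ => ?_
    simp [Matrix.vecMulVec_apply, mul_pow]
  have hFpos : 0 < frobNorm (rankOne h0 m0) := hF ▸ mul_pos hH hM
  -- coefficients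
  set c : Fin L → ℂ := fun ℓ => ∑ i, (starRingEnd ℂ) (b ℓ i) * h0 i with hcdef
  set d : Fin L → ℂ := fun ℓ => ∑ j, (Zᴴ.mulVec (b ℓ)) j * star (m0 j) with hddef
  -- tight frame identity entrywise
  have hframe : ∀ i k, ∑ ℓ, b ℓ i * (starRingEnd ℂ) (b ℓ k)
      = if i = k then (1:ℂ) else 0 := by
    intro i k
    have h1 : (∑ ℓ, Matrix.vecMulVec (b ℓ) (star (b ℓ))) = 1 := hb
    have h2 := congrFun (congrFun h1 i) k
    simp only [Matrix.sum_apply, Matrix.vecMulVec_apply, Pi.star_apply,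
      Matrix.one_apply] at h2
    rw [← h2]
    exact Finset.sum_congr rfl fun ℓ _ => by rw [starRingEnd_apply]
  have hrep : ∀ i, h0 i = ∑ ℓ, b ℓ i * c ℓ := by
    intro i
    calc h0 i = ∑ k, (if i = k then (1:ℂ) else 0) * h0 k := by simp
      _ = ∑ k, (∑ ℓ, b ℓ i * (starRingEnd ℂ) (b ℓ k)) * h0 k := by
          refine Finset.sum_congr rfl fun k _ => ?_; rw [hframe]
      _ = ∑ ℓ, b ℓ i * c ℓ := by
          simp only [Finset.sum_mul]
          rw [Finset.sum_comm]
          refine Finset.sum_congr rfl fun ℓ _ => ?_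
          rw [hcdef]
          simp only [Finset.mul_sum]
          exact Finset.sum_congr rfl fun k _ => by ring
  -- key identity
  have hinnerEq : frobInner Z (rankOne h0 m0) = ∑ ℓ, c ℓ * d ℓ := by
    rw [frobInner_eq']
    simp only [rankOne, Matrix.vecMulVec_apply, Pi.star_apply]
    calc ∑ j, ∑ i, (starRingEnd ℂ) (Z i j) * (h0 i * star (m0 j))
        = ∑ j, ∑ i, ∑ ℓ, c ℓ * ((starRingEnd ℂ) (Z i j) * b ℓ i * star (m0 j)) := by
          refine Finset.sum_congr rfl fun j _ => Finset.sum_congr rfl fun i _ => ?_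
          rw [hrep i]
          simp only [Finset.mul_sum, Finset.sum_mul]
          refine Finset.sum_congr rfl fun ℓ _ => by ring
      _ = ∑ j, ∑ ℓ, ∑ i, c ℓ * ((starRingEnd ℂ) (Z i j) * b ℓ i * star (m0 j)) :=
          Finset.sum_congr rfl fun j _ => Finset.sum_comm
      _ = ∑ ℓ, ∑ j, ∑ i, c ℓ * ((starRingEnd ℂ) (Z i j) * b ℓ i * star (m0 j)) :=
          Finset.sum_comm
      _ = ∑ ℓ, c ℓ * d ℓ := by
          refine Finset.sum_congr rfl fun ℓ _ => ?_
          rw [hddef]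
          simp only [Matrix.mulVec, dotProduct, Matrix.conjTranspose_apply,
            Finset.mul_sum, Finset.sum_mul]
          refine Finset.sum_congr rfl fun j _ => Finset.sum_congr rfl fun i _ => by
            simp only [starRingEnd_apply]; try ring
  -- bounds on the coefficients
  have hc : ∀ ℓ, ‖c ℓ‖ ≤ μ * H / Real.sqrt L := by
    intro ℓ
    rw [le_div_iff₀ hs, mul_comm]
    exact hinc ℓ
  have hd : ∀ ℓ, ‖d ℓ‖ ≤ vecNorm (Zᴴ.mulVec (b ℓ)) * M := by
    intro ℓ
    have := abs_sum_mul_le' (Zᴴ.mulVec (b ℓ)) (fun j => star (m0 j))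
    rw [vecNorm_star] at this
    exact this
  -- main estimate
  have h1 : δ * (H * M) ≤ -(frobInner Z (rankOne h0 m0)).re := by
    rw [← hF]
    exact (le_div_iff₀ hFpos).mp hdle
  have h2 : -(frobInner Z (rankOne h0 m0)).re ≤ ‖frobInner Z (rankOne h0 m0)‖ := by
    calc -(frobInner Z (rankOne h0 m0)).re ≤ |(frobInner Z (rankOne h0 m0)).re| :=
          neg_le_abs _
      _ ≤ ‖frobInner Z (rankOne h0 m0)‖ := Complex.abs_re_le_norm _
  have h3 : ‖frobInner Z (rankOne h0 m0)‖ ≤ μ * H / Real.sqrt L * M * B1norm b Z := by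
    rw [hinnerEq]
    calc ‖∑ ℓ, c ℓ * d ℓ‖ ≤ ∑ ℓ, ‖c ℓ * d ℓ‖ := norm_sum_le _ _
      _ ≤ ∑ ℓ, μ * H / Real.sqrt L * M * vecNorm (Zᴴ.mulVec (b ℓ)) := by
          refine Finset.sum_le_sum fun ℓ _ => ?_
          rw [norm_mul]
          calc ‖c ℓ‖ * ‖d ℓ‖ ≤ (μ * H / Real.sqrt L) * (vecNorm (Zᴴ.mulVec (b ℓ)) * M) := by
                apply mul_le_mul (hc ℓ) (hd ℓ) (norm_nonneg _)
                positivity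
            _ = μ * H / Real.sqrt L * M * vecNorm (Zᴴ.mulVec (b ℓ)) := by ring
      _ = μ * H / Real.sqrt L * M * B1norm b Z := by
          rw [B1norm, Finset.mul_sum]
  have hmain : δ * (H * M) * Real.sqrt L ≤ μ * H * M * B1norm b Z := by
    have := h1.trans (h2.trans h3)
    rw [div_mul_eq_mul_div, div_mul_eq_mul_div, le_div_iff₀ hs] at this
    nlinarith [this]
  rw [div_le_iff₀ hμ0]
  nlinarith [mul_pos hH hM, hmain, hB1, hs, hμ0]
end
end

section
/- Let h0 ∈ ℂ^{n1}, m0 ∈ ℂ^{n2}, and let Z ∈ D(h0 m0*) \ {0} be an element of the descent cone of the nuclear norm at the rank-one matrix h0 m0*. If ‖h0 m0* + Z‖_* ≤ ‖h0 m0*‖_*, then ‖Z‖_F ≤ −2·Re(⟨h0 m0*, Z/‖Z‖_F⟩_F). -/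
open MeasureTheory ProbabilityTheory Matrix
open scoped ENNReal

noncomputable section

lemma sqrt_add_le' {x y : ℝ} (hx : 0 ≤ x) (hy : 0 ≤ y) :
    Real.sqrt (x + y) ≤ Real.sqrt x + Real.sqrt y := by
  have h := Real.sqrt_le_sqrt (show x + y ≤ (Real.sqrt x + Real.sqrt y)^2 by
    nlinarith [Real.sq_sqrt hx, Real.sq_sqrt hy, Real.sqrt_nonneg x, Real.sqrt_nonneg y])
  rwa [Real.sqrt_sq (by positivity)] at h

lemma sqrt_sum_le {ι : Type*} (s : Finset ι) (f : ι → ℝ) (hf : ∀ i ∈ s, 0 ≤ f i) :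
    Real.sqrt (∑ i ∈ s, f i) ≤ ∑ i ∈ s, Real.sqrt (f i) := by
  classical
  induction s using Finset.cons_induction with
  | empty => simp
  | cons a s ha ih =>
    rw [Finset.sum_cons, Finset.sum_cons]
    refine le_trans (sqrt_add_le' (hf a (Finset.mem_cons_self a s))
      (Finset.sum_nonneg fun i hi => hf i (Finset.mem_cons_of_mem hi))) ?_
    exact add_le_add (le_refl _) (ih fun i hi => hf i (Finset.mem_cons_of_mem hi))

lemma trace_eq_sum_eig {p : ℕ} {A : Matrix (Fin p) (Fin p) ℂ} (hA : A.IsHermitian) :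
    A.trace = ∑ i, (hA.eigenvalues i : ℂ) := by
  conv_lhs => rw [hA.spectral_theorem, Unitary.conjStarAlgAut_apply]
  rw [Matrix.trace_mul_cycle]
  rw [show (star (hA.eigenvectorUnitary : Matrix (Fin p) (Fin p) ℂ)) *
      (hA.eigenvectorUnitary : Matrix (Fin p) (Fin p) ℂ) = 1 from
    Unitary.coe_star_mul_self hA.eigenvectorUnitary]
  simp [Matrix.trace_diagonal]

lemma frobNorm_def' {p q : ℕ} (Z : Matrix (Fin p) (Fin q) ℂ) :
    frobNorm Z = Real.sqrt (((Zᴴ * Z).trace).re) := by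
  have key : ((Zᴴ * Z).trace).re = ∑ i, ∑ j, ‖Z i j‖ ^ 2 := by
    rw [Matrix.trace]
    simp only [Matrix.diag_apply, Matrix.mul_apply, Matrix.conjTranspose_apply,
      Complex.re_sum]
    rw [Finset.sum_comm]
    refine Finset.sum_congr rfl fun i _ => Finset.sum_congr rfl fun j _ => ?_
    rw [show star (Z i j) * Z i j = ((Complex.normSq (Z i j) : ℂ)) by
      rw [Complex.star_def, mul_comm, Complex.mul_conj]]
    rw [Complex.ofReal_re, Complex.normSq_eq_norm_sq]
  rw [frobNorm, key]

lemma frobNorm_eq_sqrt_sum_eig {p q : ℕ} (Z : Matrix (Fin p) (Fin q) ℂ) :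
    frobNorm Z =
      Real.sqrt (∑ j, (Matrix.isHermitian_conjTranspose_mul_self Z).eigenvalues j) := by
  rw [frobNorm_def', trace_eq_sum_eig (Matrix.isHermitian_conjTranspose_mul_self Z)]
  congr 1
  rw [Complex.re_sum]
  exact Finset.sum_congr rfl fun j _ => Complex.ofReal_re _

lemma frob_le_nuclear {p q : ℕ} (Z : Matrix (Fin p) (Fin q) ℂ) :
    frobNorm Z ≤ nuclearNorm Z := by
  rw [frobNorm_eq_sqrt_sum_eig]
  exact sqrt_sum_le _ _ fun j _ =>
    Matrix.eigenvalues_conjTranspose_mul_self_nonneg Z j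

lemma conj_mul_self' (z : ℂ) : (starRingEnd ℂ) z * z = ((‖z‖ ^ 2 : ℝ) : ℂ) := by
  rw [mul_comm, Complex.mul_conj, Complex.normSq_eq_norm_sq]

lemma trace_re_eq {p q : ℕ} (Z : Matrix (Fin p) (Fin q) ℂ) :
    ((Zᴴ * Z).trace).re = ∑ i, ∑ j, ‖Z i j‖ ^ 2 := by
  rw [Matrix.trace]
  simp only [Matrix.diag_apply, Matrix.mul_apply, Matrix.conjTranspose_apply,
    Complex.re_sum]
  rw [Finset.sum_comm]
  refine Finset.sum_congr rfl fun i _ => Finset.sum_congr rfl fun j _ => ?_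
  rw [show star (Z i j) * Z i j = ((‖Z i j‖ ^ 2 : ℝ) : ℂ) from conj_mul_self' _,
    Complex.ofReal_re]

lemma nuclear_rankOne_eq {p q : ℕ} (h0 : Fin p → ℂ) (m0 : Fin q → ℂ) :
    nuclearNorm (rankOne h0 m0) = frobNorm (rankOne h0 m0) := by
  classical
  set X := rankOne h0 m0 with hX
  set c : ℝ := ∑ i, ‖h0 i‖ ^ 2 with hc
  set d : ℝ := ∑ j, ‖m0 j‖ ^ 2 with hd
  set t : ℝ := c * d with ht
  have hc0 : 0 ≤ c := Finset.sum_nonneg fun _ _ => sq_nonneg _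
  have hd0 : 0 ≤ d := Finset.sum_nonneg fun _ _ => sq_nonneg _
  have ht0 : 0 ≤ t := mul_nonneg hc0 hd0
  have hXapp : ∀ i j, X i j = h0 i * (starRingEnd ℂ) (m0 j) := by
    intro i j; rfl
  have hAapp : ∀ j k, (Xᴴ * X) j k = (c : ℂ) * (m0 j * (starRingEnd ℂ) (m0 k)) := by
    intro j k
    rw [Matrix.mul_apply]
    calc ∑ i, (Xᴴ) j i * X i k
        = ∑ i, ((‖h0 i‖ ^ 2 : ℝ) : ℂ) * (m0 j * (starRingEnd ℂ) (m0 k)) := by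
          refine Finset.sum_congr rfl fun i _ => ?_
          rw [Matrix.conjTranspose_apply, hXapp, hXapp]
          rw [show star (h0 i * (starRingEnd ℂ) (m0 j)) * (h0 i * (starRingEnd ℂ) (m0 k))
              = ((starRingEnd ℂ) (h0 i) * h0 i) * (m0 j * (starRingEnd ℂ) (m0 k)) by
            simp only [star_mul', Complex.star_def, RingHom.id_apply,
              Complex.conj_conj]; ring]
          rw [conj_mul_self']
      _ = (c : ℂ) * (m0 j * (starRingEnd ℂ) (m0 k)) := by
          rw [← Finset.sum_mul]; norm_cast
  have hsumd : ∑ l, (starRingEnd ℂ) (m0 l) * m0 l = (d : ℂ) := by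
    rw [show ∑ l, (starRingEnd ℂ) (m0 l) * m0 l = ∑ l, ((‖m0 l‖ ^ 2 : ℝ) : ℂ) from
      Finset.sum_congr rfl fun l _ => conj_mul_self' _]
    norm_cast
  have hAA : (Xᴴ * X) * (Xᴴ * X) = ((t : ℝ) : ℂ) • (Xᴴ * X) := by
    ext j k
    rw [Matrix.mul_apply, Matrix.smul_apply, hAapp]
    calc ∑ l, (Xᴴ * X) j l * (Xᴴ * X) l k
        = ((c : ℂ) * (c : ℂ) * (m0 j * (starRingEnd ℂ) (m0 k))) *
            ∑ l, (starRingEnd ℂ) (m0 l) * m0 l := by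
          rw [Finset.mul_sum]
          refine Finset.sum_congr rfl fun l _ => ?_
          rw [hAapp, hAapp]; ring
      _ = ((t : ℝ) : ℂ) • ((c : ℂ) * (m0 j * (starRingEnd ℂ) (m0 k))) := by
          rw [hsumd, smul_eq_mul, ht]; push_cast; ring
  set hA := Matrix.isHermitian_conjTranspose_mul_self X with hhA
  have heig : ∀ j, hA.eigenvalues j = 0 ∨ hA.eigenvalues j = t := by
    intro j
    have hv := hA.mulVec_eigenvectorBasis j
    set v : Fin q → ℂ := ⇑(hA.eigenvectorBasis j) with hvdef
    have hvne : v ≠ 0 := by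
      intro h0'
      exact hA.eigenvectorBasis.orthonormal.ne_zero j (by ext i; exact congrFun h0' i)
    obtain ⟨i, hi⟩ := Function.ne_iff.mp hvne
    have h1 : ((Xᴴ * X) *ᵥ ((Xᴴ * X) *ᵥ v)) i
        = ((hA.eigenvalues j : ℂ) * (hA.eigenvalues j : ℂ)) * v i := by
      rw [hv, Matrix.mulVec_smul, hv]
      simp only [Pi.smul_apply, Complex.real_smul]
      ring
    have h2 : ((Xᴴ * X) *ᵥ ((Xᴴ * X) *ᵥ v)) i
        = ((t : ℂ) * (hA.eigenvalues j : ℂ)) * v i := by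
      rw [Matrix.mulVec_mulVec, hAA, Matrix.smul_mulVec, hv]
      simp only [Pi.smul_apply, Complex.real_smul, smul_eq_mul]
      ring
    have h3 : ((hA.eigenvalues j : ℂ) * (hA.eigenvalues j : ℂ))
        = (t : ℂ) * (hA.eigenvalues j : ℂ) :=
      mul_right_cancel₀ hi (h1.symm.trans h2)
    have h4 : hA.eigenvalues j * hA.eigenvalues j = t * hA.eigenvalues j := by
      exact_mod_cast h3
    rcases mul_eq_zero.mp (show hA.eigenvalues j * (hA.eigenvalues j - t) = 0 by
        linear_combination h4) with h5 | h5
    · exact Or.inl h5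
    · exact Or.inr (by linarith [sub_eq_zero.mp h5])
  have htrace : ((Xᴴ * X).trace).re = t := by
    rw [trace_re_eq, ht, hc, hd, Finset.sum_mul_sum]
    refine Finset.sum_congr rfl fun i _ => Finset.sum_congr rfl fun j _ => ?_
    rw [hXapp, norm_mul, mul_pow]
    congr 2
    simp
  have hsum : ∑ j, hA.eigenvalues j = t := by
    have h5 := congrArg Complex.re (trace_eq_sum_eig hA)
    rw [htrace, Complex.re_sum] at h5
    simpa using h5.symm
  have hfrob : frobNorm X = Real.sqrt t := by rw [frobNorm_def', htrace]
  have hsqrt : ∀ j, Real.sqrt (hA.eigenvalues j) = hA.eigenvalues j / Real.sqrt t := by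
    intro j
    rcases heig j with h5 | h5
    · simp [h5]
    · rw [h5, Real.div_sqrt]
  rw [show nuclearNorm X = ∑ j, Real.sqrt (hA.eigenvalues j) from rfl, hfrob]
  calc ∑ j, Real.sqrt (hA.eigenvalues j)
      = ∑ j, hA.eigenvalues j / Real.sqrt t :=
        Finset.sum_congr rfl fun j _ => hsqrt j
    _ = t / Real.sqrt t := by rw [← Finset.sum_div, hsum]
    _ = Real.sqrt t := Real.div_sqrt

lemma frobNorm_nonneg {p q : ℕ} (Z : Matrix (Fin p) (Fin q) ℂ) : 0 ≤ frobNorm Z :=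
  Real.sqrt_nonneg _

lemma frobNorm_pos {p q : ℕ} {Z : Matrix (Fin p) (Fin q) ℂ} (hZ : Z ≠ 0) :
    0 < frobNorm Z := by
  have hij : ∃ i j, Z i j ≠ 0 := by
    by_contra hc
    push_neg at hc
    exact hZ (by ext i j; exact hc i j)
  obtain ⟨i, j, hij⟩ := hij
  refine Real.sqrt_pos.mpr ?_
  exact Finset.sum_pos' (fun _ _ => Finset.sum_nonneg fun _ _ => sq_nonneg _)
    ⟨i, Finset.mem_univ i, Finset.sum_pos' (fun _ _ => sq_nonneg _)
      ⟨j, Finset.mem_univ j, pow_pos (norm_pos_iff.mpr hij) 2⟩⟩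

lemma frobInner_re_eq {p q : ℕ} (X Z : Matrix (Fin p) (Fin q) ℂ) :
    (frobInner X Z).re = ∑ i, ∑ j, ((starRingEnd ℂ) (X i j) * Z i j).re := by
  rw [frobInner, Matrix.trace]
  simp only [Matrix.diag_apply, Matrix.mul_apply, Matrix.conjTranspose_apply,
    Complex.re_sum]
  rw [Finset.sum_comm]
  rfl

lemma frob_sq_expand {p q : ℕ} (X Z : Matrix (Fin p) (Fin q) ℂ) :
    frobNorm (X + Z) ^ 2 = frobNorm X ^ 2 + 2 * (frobInner X Z).re + frobNorm Z ^ 2 := by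
  have expand : ∀ a b : ℂ, ‖a + b‖ ^ 2
      = ‖a‖ ^ 2 + 2 * ((starRingEnd ℂ) a * b).re + ‖b‖ ^ 2 := by
    intro a b
    have h1 := Complex.normSq_add a b
    have h2 : ((starRingEnd ℂ) a * b).re = (a * (starRingEnd ℂ) b).re := by
      rw [show (starRingEnd ℂ) a * b = (starRingEnd ℂ) (a * (starRingEnd ℂ) b) by
        rw [_root_.map_mul, Complex.conj_conj], Complex.conj_re]
    rw [h2]
    simp only [Complex.sq_norm]
    linarith
  have hs : ∀ W : Matrix (Fin p) (Fin q) ℂ, frobNorm W ^ 2 = ∑ i, ∑ j, ‖W i j‖ ^ 2 := by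
    intro W
    rw [frobNorm, Real.sq_sqrt
      (Finset.sum_nonneg fun _ _ => Finset.sum_nonneg fun _ _ => sq_nonneg _)]
  rw [hs, hs, hs, frobInner_re_eq]
  simp only [Matrix.add_apply, expand]
  rw [Finset.mul_sum]
  simp only [Finset.mul_sum, Finset.sum_add_distrib]

lemma frobInner_smul_re {p q : ℕ} (X Z : Matrix (Fin p) (Fin q) ℂ) (r : ℝ) :
    (frobInner X (r • Z)).re = r * (frobInner X Z).re := by
  rw [frobInner_re_eq, frobInner_re_eq, Finset.mul_sum]
  refine Finset.sum_congr rfl fun i _ => ?_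
  rw [Finset.mul_sum]
  refine Finset.sum_congr rfl fun j _ => ?_
  rw [Matrix.smul_apply]
  rw [show (starRingEnd ℂ) (X i j) * (r • Z i j) = r • ((starRingEnd ℂ) (X i j) * Z i j) by
    simp only [Complex.real_smul, smul_eq_mul]; ring]
  rw [Complex.real_smul, Complex.mul_re, Complex.ofReal_re, Complex.ofReal_im]
  ring

/-- Lemma 5.7: bound on the admissible descent step size in the
descent cone of the nuclear norm at a rank-one matrix. -/
theorem descent_step_size_bound {n1 n2 : ℕ} (h0 : Fin n1 → ℂ) (m0 : Fin n2 → ℂ)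
    (Z : Matrix (Fin n1) (Fin n2) ℂ)
    (hZ : Z ∈ descentCone (rankOne h0 m0)) (hZ0 : Z ≠ 0)
    (h : nuclearNorm (rankOne h0 m0 + Z) ≤ nuclearNorm (rankOne h0 m0)) :
    frobNorm Z ≤ -(2 * (frobInner (rankOne h0 m0) ((frobNorm Z)⁻¹ • Z)).re) := by
  set X := rankOne h0 m0 with hX
  have key : frobNorm (X + Z) ≤ frobNorm X :=
    le_trans (frob_le_nuclear _) (le_trans h (le_of_eq (nuclear_rankOne_eq h0 m0)))
  have hsq := pow_le_pow_left₀ (frobNorm_nonneg _) key 2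
  rw [frob_sq_expand] at hsq
  have h3 : frobNorm Z ^ 2 ≤ -(2 * (frobInner X Z).re) := by linarith
  have hr : 0 < frobNorm Z := frobNorm_pos hZ0
  calc frobNorm Z = frobNorm Z ^ 2 * (frobNorm Z)⁻¹ := by
        rw [sq, mul_assoc, mul_inv_cancel₀ hr.ne', mul_one]
    _ ≤ -(2 * (frobInner X Z).re) * (frobNorm Z)⁻¹ :=
        mul_le_mul_of_nonneg_right h3 (inv_nonneg.mpr hr.le)
    _ = -(2 * ((frobNorm Z)⁻¹ * (frobInner X Z).re)) := by ring
    _ = -(2 * (frobInner X ((frobNorm Z)⁻¹ • Z)).re) := by rw [frobInner_smul_re]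
end
end
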